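/- No winner of Greedy-ISK can change the output while remaining a winner: fix the graph G, the values v, the budget B, the deterministic maximum-matching oracle f, and the reported costs b_{-j} of all edges other than j. Let M be the output of Greedy-ISK when edge j reports b_j and M' its output when edge j reports b_j'. If j ∈ M and j ∈ M', then M = M'. -/

import Mathlib

open Finset

/-- A set of (indices of) edges is a matching if the corresponding edges are pairwise
vertex-disjoint. -/
def IsMatchingIdx {V : Type} {m : ℕ} (edge : Fin m → Sym2 V) (M : Finset (Fin m)) : Prop :=
  (M : Set (Fin m)).Pairwise fun i k => ∀ a, a ∈ edge i → a ∉ edge k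

/-- The first edge of `A` in the greedy order: the edge with the largest ratio `b i / v i`,
ties broken by a fixed linear order on the edges (here: the larger index). -/
noncomputable def pickMax {m : ℕ} (v b : Fin m → ℝ) (A : Finset (Fin m)) (h : A.Nonempty) :
    Fin m :=
  (A.exists_max_image (fun i => (toLex (b i / v i, (i : ℕ)) : Lex (ℝ × ℕ))) h).choose

lemma pickMax_mem {m : ℕ} (v b : Fin m → ℝ) (A : Finset (Fin m)) (h : A.Nonempty) :
    pickMax v b A h ∈ A :=
  (A.exists_max_image (fun i => (toLex (b i / v i, (i : ℕ)) : Lex (ℝ × ℕ))) h).choose_spec.1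

/-- The Greedy-ISK mechanism: repeatedly compute the maximum-value matching `f A` among the
active edges `A`; if `v(f A) · (b k / v k) ≤ B`, where `k` is the active edge of largest
ratio, return `f A`; otherwise deactivate `k` and continue; return `∅` if `A` is empty. -/
noncomputable def greedyISK {m : ℕ} (v b : Fin m → ℝ) (B : ℝ)
    (f : Finset (Fin m) → Finset (Fin m)) (A : Finset (Fin m)) : Finset (Fin m) :=
  if h : A.Nonempty then
    if (∑ i ∈ f A, v i) * (b (pickMax v b A h) / v (pickMax v b A h)) ≤ B then f A
    else greedyISK v b B f (A.erase (pickMax v b A h))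
  else ∅
termination_by A.card
decreasing_by exact Finset.card_erase_lt_of_mem (pickMax_mem v b A h)

lemma pickMax_spec {m : ℕ} (v b : Fin m → ℝ) (A : Finset (Fin m)) (h : A.Nonempty) :
    ∀ i ∈ A, (toLex (b i / v i, (i : ℕ)) : Lex (ℝ × ℕ)) ≤
      toLex (b (pickMax v b A h) / v (pickMax v b A h), ((pickMax v b A h) : ℕ)) :=
  (A.exists_max_image (fun i => (toLex (b i / v i, (i : ℕ)) : Lex (ℝ × ℕ))) h).choose_spec.2

lemma pickMax_eq {m : ℕ} (v b : Fin m → ℝ) (A : Finset (Fin m)) (h : A.Nonempty)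
    (k : Fin m) (hk : k ∈ A)
    (hmax : ∀ i ∈ A, (toLex (b i / v i, (i : ℕ)) : Lex (ℝ × ℕ)) ≤ toLex (b k / v k, (k : ℕ))) :
    pickMax v b A h = k := by
  have h1 := pickMax_spec v b A h k hk
  have h2 := hmax _ (pickMax_mem v b A h)
  have h3 := le_antisymm h2 h1
  exact Fin.ext (congrArg Prod.snd (toLex.injective h3))

lemma greedyISK_subset {m : ℕ} (v b : Fin m → ℝ) (B : ℝ)
    (f : Finset (Fin m) → Finset (Fin m)) (hf1 : ∀ A, f A ⊆ A) (A : Finset (Fin m)) :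
    greedyISK v b B f A ⊆ A := by
  rw [greedyISK]
  split_ifs with h h2
  · exact hf1 A
  · exact (greedyISK_subset v b B f hf1 _).trans (erase_subset _ _)
  · exact empty_subset _
termination_by A.card
decreasing_by exact Finset.card_erase_lt_of_mem (pickMax_mem v b A h)

lemma lex_mono_fst {a a' : ℝ} {n : ℕ} (h : a ≤ a') :
    (toLex (a, n) : Lex (ℝ × ℕ)) ≤ toLex (a', n) := by
  rcases h.lt_or_eq with h | h
  · exact Prod.Lex.le_iff.mpr (Or.inl h)
  · exact Prod.Lex.le_iff.mpr (Or.inr ⟨h, le_refl _⟩)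

lemma greedy_eq {m : ℕ} (v : Fin m → ℝ) (hv : ∀ i, 0 < v i) (B : ℝ)
    (f : Finset (Fin m) → Finset (Fin m)) (hf1 : ∀ A, f A ⊆ A)
    (c c' : Fin m → ℝ) (j : Fin m) (hle : ∀ i, c i ≤ c' i)
    (hoff : ∀ i, i ≠ j → c i = c' i) (S : Finset (Fin m))
    (hj : j ∈ greedyISK v c' B f S) :
    greedyISK v c B f S = greedyISK v c' B f S := by
  have hS : S.Nonempty := ⟨j, greedyISK_subset v c' B f hf1 S hj⟩
  rw [greedyISK] at hj
  rw [dif_pos hS] at hj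
  conv_lhs => rw [greedyISK]
  conv_rhs => rw [greedyISK]
  rw [dif_pos hS, dif_pos hS]
  have hk₂S : pickMax v c' S hS ∈ S := pickMax_mem v c' S hS
  by_cases hC' : (∑ i ∈ f S, v i) * (c' (pickMax v c' S hS) / v (pickMax v c' S hS)) ≤ B
  · rw [if_pos hC']
    have hsum : (0:ℝ) ≤ ∑ i ∈ f S, v i := Finset.sum_nonneg fun i _ => (hv i).le
    have hk₁S : pickMax v c S hS ∈ S := pickMax_mem v c S hS
    have h1 : c (pickMax v c S hS) / v (pickMax v c S hS) ≤
        c' (pickMax v c S hS) / v (pickMax v c S hS) :=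
      div_le_div_of_nonneg_right (hle _) (hv _).le
    have h2 : c' (pickMax v c S hS) / v (pickMax v c S hS) ≤
        c' (pickMax v c' S hS) / v (pickMax v c' S hS) := by
      have hs := pickMax_spec v c' S hS _ hk₁S
      rcases Prod.Lex.le_iff.mp hs with hlt | ⟨heq, _⟩
      · exact hlt.le
      · exact heq.le
    have hC : (∑ i ∈ f S, v i) * (c (pickMax v c S hS) / v (pickMax v c S hS)) ≤ B :=
      le_trans (mul_le_mul_of_nonneg_left (h1.trans h2) hsum) hC'
    rw [if_pos hC]
  · rw [if_neg hC'] at hj ⊢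
    have hjS : j ∈ S.erase (pickMax v c' S hS) := greedyISK_subset v c' B f hf1 _ hj
    have hjk : j ≠ pickMax v c' S hS := (mem_erase.mp hjS).1
    have hck : c (pickMax v c' S hS) = c' (pickMax v c' S hS) := hoff _ (Ne.symm hjk)
    have hpk : pickMax v c S hS = pickMax v c' S hS := by
      apply pickMax_eq v c S hS _ hk₂S
      intro i hi
      by_cases hij : i = j
      · subst hij
        have hr : c i / v i ≤ c' i / v i := div_le_div_of_nonneg_right (hle i) (hv i).le
        refine (lex_mono_fst hr).trans ?_
        have := pickMax_spec v c' S hS i hi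
        rw [hck]
        exact this
      · rw [hoff i hij, hck]
        exact pickMax_spec v c' S hS i hi
    rw [hpk, hck, if_neg hC']
    exact greedy_eq v hv B f hf1 c c' j hle hoff _ hj
termination_by S.card
decreasing_by exact Finset.card_erase_lt_of_mem hk₂S


/-- **no winner of Greedy-ISK can change the output.** Fix the graph, the
values, the budget, the deterministic maximum-matching oracle `f`, and the reported costs
of all edges other than `j`. Let `M` be the output of Greedy-ISK when edge `j` reports
`b_j` and `M'` its output when `j` reports `b_j'`. If `j ∈ M` and `j ∈ M'`, then `M = M'`. -/
theorem greedy_isk_winner_invariant (V : Type) [Fintype V] [DecidableEq V]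
    (m : ℕ) (edge : Fin m → Sym2 V) (hinj : Function.Injective edge)
    (hsimple : ∀ i, ¬ (edge i).IsDiag)
    (v : Fin m → ℝ) (hv : ∀ i, 0 < v i) (B : ℝ) (hB : 0 < B)
    (f : Finset (Fin m) → Finset (Fin m))
    (hf : ∀ A : Finset (Fin m), f A ⊆ A ∧ IsMatchingIdx edge (f A) ∧
      ∀ M : Finset (Fin m), M ⊆ A → IsMatchingIdx edge M →
        ∑ i ∈ M, v i ≤ ∑ i ∈ f A, v i)
    (b : Fin m → ℝ) (hb : ∀ i, 0 ≤ b i)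
    (j : Fin m) (bj bj' : ℝ) (hbj : 0 ≤ bj) (hbj' : 0 ≤ bj')
    (hwin : j ∈ greedyISK v (Function.update b j bj) B f
      (univ.filter fun i => Function.update b j bj i ≤ B))
    (hwin' : j ∈ greedyISK v (Function.update b j bj') B f
      (univ.filter fun i => Function.update b j bj' i ≤ B)) :
    greedyISK v (Function.update b j bj) B f
        (univ.filter fun i => Function.update b j bj i ≤ B) =
      greedyISK v (Function.update b j bj') B f
        (univ.filter fun i => Function.update b j bj' i ≤ B) := by
  
  classical
  have hf1 : ∀ A, f A ⊆ A := fun A => (hf A).1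
  have hbjB : bj ≤ B := by
    have := (mem_filter.mp (greedyISK_subset v _ B f hf1 _ hwin)).2
    simpa using this
  have hbj'B : bj' ≤ B := by
    have := (mem_filter.mp (greedyISK_subset v _ B f hf1 _ hwin')).2
    simpa using this
  have hAA' : (univ.filter fun i => Function.update b j bj i ≤ B) =
      (univ.filter fun i => Function.update b j bj' i ≤ B) := by
    ext i
    simp only [mem_filter, mem_univ, true_and]
    rcases eq_or_ne i j with rfl | h
    · simp [hbjB, hbj'B]
    · rw [Function.update_of_ne h, Function.update_of_ne h]
  rcases le_total bj bj' with h | h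
  · rw [hAA']
    refine greedy_eq v hv B f hf1 _ _ j ?_ ?_ _ (hAA' ▸ hwin')
    · intro i
      rcases eq_or_ne i j with rfl | hi
      · simpa using h
      · rw [Function.update_of_ne hi, Function.update_of_ne hi]
    · intro i hi
      rw [Function.update_of_ne hi, Function.update_of_ne hi]
  · rw [hAA']
    refine (greedy_eq v hv B f hf1 _ _ j ?_ ?_ _ (hAA' ▸ hwin)).symm
    · intro i
      rcases eq_or_ne i j with rfl | hi
      · simpa using h
      · rw [Function.update_of_ne hi, Function.update_of_ne hi]
    · intro i hi
      rw [Function.update_of_ne hi, Function.update_of_ne hi]
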